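/- Let Ω₂(u) be the 2×2 matrix with entries Ω₂¹¹ = (4/3)u₁, Ω₂¹² = Ω₂²¹ = (2h/3)u₂, Ω₂²² = −(2h²/(3u₁))(u₂² − 6u₁^h), which is (a scalar multiple of) the inverse Hessian metric of u₁ = x₁²x₂² in the coordinates u₁ = x₁²x₂², u₂ = x₁^{2h}+x₂^{2h}. Then for e = u₁^{(h/2)(1+√3)} ∂_{u₂}, the Lie derivative Ω₁ = L_e Ω₂ has matrix Ω₁¹¹ = 0, Ω₁¹² = Ω₁²¹ = −(2h/√3)·u₁^{(1+√3)h/2}, Ω₁²² = −(2/3)(3+√3)h²·u₁^{(1+√3)h/2 − 1}·u₂. -/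

import Mathlib

open Real

/-- Partial derivative of a function of `n` real variables. -/
noncomputable def pd {n : ℕ} (i : Fin n) (f : (Fin n → ℝ) → ℝ) : (Fin n → ℝ) → ℝ :=
  fun t => deriv (fun s => f (Function.update t i s)) (t i)

/-- The intersection form `Ω₂` on the orbit space of the dicyclic group
(the inverse Hessian metric of `u₁ = x₁²x₂²` in coordinates `u₁, u₂`). -/
noncomputable def Ω₂dic (h : ℝ) (u : Fin 2 → ℝ) : Matrix (Fin 2) (Fin 2) ℝ :=
  !![4 / 3 * u 0, 2 * h / 3 * u 1;
     2 * h / 3 * u 1, -(2 * h ^ 2 / (3 * u 0)) * ((u 1) ^ 2 - 6 * (u 0) ^ h)]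

/-- The vector field `e = u₁^{(h/2)(1+√3)} ∂_{u₂}`. -/
noncomputable def eDic (h : ℝ) (i : Fin 2) (u : Fin 2 → ℝ) : ℝ :=
  if i = 0 then 0 else (u 0) ^ (h / 2 * (1 + Real.sqrt 3))

/-- The claimed matrix of the Lie derivative `Ω₁ = L_e Ω₂`. -/
noncomputable def Ω₁dic (h : ℝ) (u : Fin 2 → ℝ) : Matrix (Fin 2) (Fin 2) ℝ :=
  !![0, -(2 * h / Real.sqrt 3) * (u 0) ^ ((1 + Real.sqrt 3) * h / 2);
     -(2 * h / Real.sqrt 3) * (u 0) ^ ((1 + Real.sqrt 3) * h / 2),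
     -(2 / 3) * (3 + Real.sqrt 3) * h ^ 2 * (u 0) ^ ((1 + Real.sqrt 3) * h / 2 - 1) * u 1]

/-!
The field `e = f(u₁) ∂_{u₂}` has the single nonvanishing derivative `∂_{u₁}e² = f'`, so
`(L_e Ω₂)^{ij} = f ∂_{u₂}Ω₂^{ij} - [i = 2] Ω₂^{1j} f' - [j = 2] Ω₂^{i1} f'`. With `f = u₁^a`,
`a = (1 + √3)h/2`, one has `u₁ f' = a f`, and each entry collapses to a multiple of `f` or of
`u₁^{a-1} u₂` whose coefficient is simplified using `√3² = 3`.
-/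

theorem pd_eq_of_hasDerivAt {n : ℕ} {i : Fin n} {f : (Fin n → ℝ) → ℝ} {u : Fin n → ℝ} {f' : ℝ}
    (hf : HasDerivAt (fun s => f (Function.update u i s)) f' (u i)) : pd i f u = f' :=
  hf.deriv

theorem pd_eq_zero_of_update_eq {n : ℕ} {i : Fin n} {f : (Fin n → ℝ) → ℝ} {u : Fin n → ℝ}
    (hf : ∀ s, f (Function.update u i s) = f u) : pd i f u = 0 := by
  simp [pd, hf]

theorem pd_eDic (h : ℝ) (u : Fin 2 → ℝ) (i k : Fin 2) :
    pd k (eDic h i) u =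
      if i = 1 ∧ k = 0 then h / 2 * (1 + √3) * u 0 ^ (h / 2 * (1 + √3) - 1) else 0 := by
  fin_cases i <;> fin_cases k
  · exact pd_eq_zero_of_update_eq fun s => by simp [eDic]
  · exact pd_eq_zero_of_update_eq fun s => by simp [eDic]
  · simp [pd, eDic, Real.deriv_rpow_const]
  · exact pd_eq_zero_of_update_eq fun s => by simp [eDic]

theorem pd_one_Ω₂dic (h : ℝ) (u : Fin 2 → ℝ) (i j : Fin 2) :
    pd 1 (fun v => Ω₂dic h v i j) u =
      !![0, 2 * h / 3; 2 * h / 3, -(2 * h ^ 2 / (3 * u 0)) * (2 * u 1)] i j := by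
  fin_cases i <;> fin_cases j
  · exact pd_eq_zero_of_update_eq fun s => by simp [Ω₂dic]
  · apply pd_eq_of_hasDerivAt
    simpa [Ω₂dic] using (hasDerivAt_id (u 1)).const_mul (2 * h / 3)
  · apply pd_eq_of_hasDerivAt
    simpa [Ω₂dic] using (hasDerivAt_id (u 1)).const_mul (2 * h / 3)
  · apply pd_eq_of_hasDerivAt
    simpa [Ω₂dic] using
      ((hasDerivAt_pow 2 (u 1)).sub_const (6 * u 0 ^ h)).const_mul (-(2 * h ^ 2 / (3 * u 0)))

theorem stmt_17_general (h : ℝ) :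
    ∀ u : Fin 2 → ℝ, 0 < u 0 → ∀ i j : Fin 2,
      eDic h 1 u * pd 1 (fun v => Ω₂dic h v i j) u
        - (∑ k : Fin 2, Ω₂dic h u k j * pd k (eDic h i) u)
        - (∑ k : Fin 2, Ω₂dic h u i k * pd k (eDic h j) u)
      = Ω₁dic h u i j := by
  intro u hu i j
  have hsqrt : √3 ^ 2 = 3 := Real.sq_sqrt (by norm_num)
  have hpow : u 0 ^ ((1 + √3) * h / 2) = u 0 ^ ((1 + √3) * h / 2 - 1) * u 0 := by
    rw [Real.rpow_sub_one hu.ne', div_mul_cancel₀ _ hu.ne']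
  have hexp : h / 2 * (1 + √3) = (1 + √3) * h / 2 := by ring
  simp only [pd_one_Ω₂dic, pd_eDic, Fin.sum_univ_two, hexp]
  fin_cases i <;> fin_cases j <;>
    simp only [eDic, Ω₂dic, Ω₁dic, Fin.isValue, Fin.zero_eta, Fin.mk_one, one_ne_zero, zero_ne_one,
      ↓reduceIte, hexp, hpow, Matrix.of_apply, Matrix.cons_val', Matrix.cons_val_zero,
      Matrix.cons_val_one, Matrix.cons_val_fin_one, and_self, and_true, and_false, neg_mul, mul_neg,
      mul_zero, add_zero, sub_zero, sub_self] <;> field_simp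
  · linear_combination (-4 * h) * hsqrt
  · linear_combination (-4 * h) * hsqrt
  · ring

/-- The Lie derivative of `Ω₂` along `e = u₁^{(h/2)(1+√3)} ∂_{u₂}`, computed by
`(L_e Ω)^{ij} = f·∂_{u₂}Ω^{ij} - Ω^{kj}∂_{u_k}e^i - Ω^{ik}∂_{u_k}e^j`, equals `Ω₁`. -/
theorem stmt_17 (h : ℝ) (hh : 0 < h) :
    ∀ u : Fin 2 → ℝ, 0 < u 0 → ∀ i j : Fin 2,
      eDic h 1 u * pd 1 (fun v => Ω₂dic h v i j) u
        - (∑ k : Fin 2, Ω₂dic h u k j * pd k (eDic h i) u)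
        - (∑ k : Fin 2, Ω₂dic h u i k * pd k (eDic h j) u)
      = Ω₁dic h u i j :=
  stmt_17_general h
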